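/- arXiv:1911.05302 — 2 statements merged into one kernel-verified Lean document; each statement's English description precedes it below -/
import Mathlib

section
/- Let A be a nonnegative weakly irreducible tensor of order m and dimension n, and let x be an eigenvector of A corresponding to the spectral radius ρ(A). Then x has no zero entries. -/
open Finset

/-- A `k`-uniform hypergraph on vertex set `Fin n`. -/
structure UniformHypergraph (n k : ℕ) where
  edges : Finset (Finset (Fin n))
  card_eq : ∀ e ∈ edges, e.card = k

namespace UniformHypergraph

variable {n k : ℕ}

/-- Degree of a vertex: the number of edges containing it. -/
def degree (G : UniformHypergraph n k) (i : Fin n) : ℕ :=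
  (G.edges.filter (fun e => i ∈ e)).card

/-- Maximum degree ∇ of the hypergraph. -/
def maxDegree (G : UniformHypergraph n k) : ℕ :=
  Finset.univ.sup G.degree

/-- The adjacency tensor: entry `1/(k-1)!` if the index tuple enumerates an edge. -/
noncomputable def adjTensor (G : UniformHypergraph n k) : (Fin k → Fin n) → ℝ :=
  fun f => if Finset.image f Finset.univ ∈ G.edges then 1 / (Nat.factorial (k - 1)) else 0

/-- The identity tensor `I`: 1 on the diagonal, 0 elsewhere. -/
noncomputable def idTensor (n k : ℕ) [NeZero k] : (Fin k → Fin n) → ℝ :=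
  fun f => if ∀ j, f j = f 0 then 1 else 0

/-- The degree (diagonal) tensor `D`. -/
noncomputable def degTensor (G : UniformHypergraph n k) [NeZero k] : (Fin k → Fin n) → ℝ :=
  fun f => if ∀ j, f j = f 0 then (G.degree (f 0) : ℝ) else 0

/-- The Laplacian tensor `L = D - A`. -/
noncomputable def lapTensor (G : UniformHypergraph n k) [NeZero k] : (Fin k → Fin n) → ℝ :=
  fun f => G.degTensor f - G.adjTensor f

end UniformHypergraph

/-- `(T x^{k-1})_i = ∑_{i₂,…,i_k} t_{i i₂ … i_k} x_{i₂} ⋯ x_{i_k}`. -/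
noncomputable def tapply {ι : Type*} [Fintype ι] [DecidableEq ι] {k : ℕ} [NeZero k]
    (T : (Fin k → ι) → ℝ) (x : ι → ℝ) : ι → ℝ :=
  fun i => ∑ g : Fin k → ι,
    if g 0 = i then T g * ∏ j ∈ Finset.univ.erase (0 : Fin k), x (g j) else 0

/-- `(λ, x)` is an eigenpair of `T` : `T x^{k-1} = λ x^{[k-1]}`, `x ≠ 0`. -/
def IsEigenpair {n k : ℕ} [NeZero k] (T : (Fin k → Fin n) → ℝ) (lam : ℝ)
    (x : Fin n → ℝ) : Prop :=
  x ≠ 0 ∧ tapply T x = fun i => lam * (x i) ^ (k - 1)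

/-- Complex version of `T x^{k-1}` for a real tensor `T`. -/
noncomputable def capply {n k : ℕ} [NeZero k] (T : (Fin k → Fin n) → ℝ) (x : Fin n → ℂ) : Fin n → ℂ :=
  fun i => ∑ g : Fin k → Fin n,
    if g 0 = i then (T g : ℂ) * ∏ j ∈ Finset.univ.erase (0 : Fin k), x (g j) else 0

/-- `lam` is a (complex) eigenvalue of the real tensor `T`. -/
def IsCEigenvalue {n k : ℕ} [NeZero k] (T : (Fin k → Fin n) → ℝ) (lam : ℂ) : Prop :=
  ∃ x : Fin n → ℂ, x ≠ 0 ∧ capply T x = fun i => lam * (x i) ^ (k - 1)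

/-- The spectral radius: the maximum modulus of eigenvalues of `T`. -/
noncomputable def specRad {n k : ℕ} [NeZero k] (T : (Fin k → Fin n) → ℝ) : ℝ :=
  sSup {r : ℝ | ∃ lam : ℂ, IsCEigenvalue T lam ∧ ‖lam‖ = r}

/-- Arc `(i,j)` of the directed graph associated with a nonnegative tensor. -/
def tensorArc {n k : ℕ} [NeZero k] (T : (Fin k → Fin n) → ℝ) (i j : Fin n) : Prop :=
  ∃ g : Fin k → Fin n, g 0 = i ∧ 0 < T g ∧ ∃ l : Fin k, l ≠ 0 ∧ g l = j

/-- A tensor is weakly irreducible if its associated digraph is strongly connected. -/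
def WeaklyIrreducible {n k : ℕ} [NeZero k] (T : (Fin k → Fin n) → ℝ) : Prop :=
  ∀ i j : Fin n, Relation.ReflTransGen (tensorArc T) i j

namespace UniformHypergraph

variable {n k : ℕ}

/-- Two vertices are adjacent if some edge contains both. -/
def adjRel (G : UniformHypergraph n k) (u v : Fin n) : Prop :=
  ∃ e ∈ G.edges, u ∈ e ∧ v ∈ e

/-- A hypergraph is connected if any two vertices are joined by a path. -/
def Connected (G : UniformHypergraph n k) : Prop :=
  ∀ u v : Fin n, Relation.ReflTransGen (G.adjRel) u v

/-- `V : Fin r → Finset (Fin n)` lists the connected components of `G`: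
the `V j` are nonempty, partition the vertex set, and each `V j` is exactly a
connectivity class. -/
def IsComponents (G : UniformHypergraph n k) {r : ℕ} (V : Fin r → Finset (Fin n)) : Prop :=
  (∀ i : Fin n, ∃! j : Fin r, i ∈ V j) ∧
  (∀ j : Fin r, (V j).Nonempty) ∧
  (∀ j : Fin r, ∀ u ∈ V j, ∀ v : Fin n,
    (v ∈ V j ↔ Relation.ReflTransGen (G.adjRel) u v))

end UniformHypergraph

/-- Principal subtensor of `T` indexed by the subset `S`. -/
noncomputable def subtensor {n k : ℕ} (T : (Fin k → Fin n) → ℝ) (S : Finset (Fin n)) :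
    (Fin k → {i // i ∈ S}) → ℝ :=
  fun f => T (fun j => (f j : Fin n))

/-- Restriction of a vector to the coordinates in `S`. -/
noncomputable def restrictVec {n : ℕ} (x : Fin n → ℝ) (S : Finset (Fin n)) : {i // i ∈ S} → ℝ :=
  fun i => x i

/-- Indicator vector of a subset. -/
noncomputable def indicator {n : ℕ} (S : Finset (Fin n)) : Fin n → ℝ :=
  fun j => if j ∈ S then 1 else 0

/-- `r` is the maximum number of linearly independent elements of `S`. -/
def maxLinIndep {V : Type*} [AddCommGroup V] [Module ℝ V] (S : Set V) (r : ℕ) : Prop :=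
  (∃ v : Fin r → V, (∀ i, v i ∈ S) ∧ LinearIndependent ℝ v) ∧
  (∀ (m : ℕ) (w : Fin m → V), (∀ i, w i ∈ S) → LinearIndependent ℝ w → m ≤ r)


section Basics
variable {n k : ℕ} [NeZero k]

lemma card_erase_zero : ((univ : Finset (Fin k)).erase 0).card = k - 1 := by
  rw [Finset.card_erase_of_mem (mem_univ _), Finset.card_univ, Fintype.card_fin]

lemma tapply_nonneg (T : (Fin k → Fin n) → ℝ) (hT : ∀ f, 0 ≤ T f)
    (z : Fin n → ℝ) (hz : ∀ v, 0 ≤ z v) (i : Fin n) : 0 ≤ tapply T z i := by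
  apply Finset.sum_nonneg
  intro g _
  split
  · exact mul_nonneg (hT g) (Finset.prod_nonneg fun j _ => hz _)
  · exact le_rfl

lemma tapply_mono (T : (Fin k → Fin n) → ℝ) (hT : ∀ f, 0 ≤ T f)
    {a b : Fin n → ℝ} (ha : ∀ v, 0 ≤ a v) (hab : ∀ v, a v ≤ b v) (i : Fin n) :
    tapply T a i ≤ tapply T b i := by
  apply Finset.sum_le_sum
  intro g _
  split
  · exact mul_le_mul_of_nonneg_left
      (Finset.prod_le_prod (fun j _ => ha _) (fun j _ => hab _)) (hT g)
  · exact le_rfl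

lemma tapply_smul (T : (Fin k → Fin n) → ℝ) (t : ℝ) (z : Fin n → ℝ) (i : Fin n) :
    tapply T (fun j => t * z j) i = t ^ (k - 1) * tapply T z i := by
  unfold tapply
  rw [Finset.mul_sum]
  apply Finset.sum_congr rfl
  intro g _
  split
  · rw [Finset.prod_mul_distrib, Finset.prod_const, card_erase_zero]
    ring
  · simp

lemma single_le_tapply (T : (Fin k → Fin n) → ℝ) (hT : ∀ f, 0 ≤ T f)
    (z : Fin n → ℝ) (hz : ∀ v, 0 ≤ z v) (g : Fin k → Fin n) (i : Fin n) (hg : g 0 = i) :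
    T g * ∏ j ∈ Finset.univ.erase (0 : Fin k), z (g j) ≤ tapply T z i := by
  have := Finset.single_le_sum (f := fun g' : Fin k → Fin n =>
      if g' 0 = i then T g' * ∏ j ∈ Finset.univ.erase (0 : Fin k), z (g' j) else 0)
    (fun g' _ => by
      by_cases h : g' 0 = i
      · simpa [h] using mul_nonneg (hT g') (Finset.prod_nonneg fun j _ => hz (g' j))
      · simp [h]) (Finset.mem_univ g)
  simpa [hg, tapply] using this

lemma sum_prod_eq (z : Fin n → ℝ) (i : Fin n) :
    (∑ g : Fin k → Fin n, if g 0 = i then ∏ j ∈ Finset.univ.erase (0 : Fin k), z (g j) else 0)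
      = (∑ v, z v) ^ (k - 1) := by
  classical
  have key : ∀ g : Fin k → Fin n,
      (if g 0 = i then ∏ j ∈ Finset.univ.erase (0 : Fin k), z (g j) else 0)
        = ∏ j : Fin k, (fun (j : Fin k) (v : Fin n) =>
            if j = 0 then (if v = i then (1:ℝ) else 0) else z v) j (g j) := by
    intro g
    rw [← Finset.prod_erase_mul (a := (0 : Fin k)) (h := mem_univ 0)]
    simp only [if_pos rfl]
    have : ∏ j ∈ (univ : Finset (Fin k)).erase 0,
        (fun (j : Fin k) (v : Fin n) => if j = 0 then (if v = i then (1:ℝ) else 0) else z v) j (g j)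
        = ∏ j ∈ (univ : Finset (Fin k)).erase 0, z (g j) := by
      apply Finset.prod_congr rfl; intro j hj
      simp [(Finset.mem_erase.mp hj).1]
    rw [this]
    by_cases h : g 0 = i <;> simp [h]
  calc (∑ g : Fin k → Fin n, if g 0 = i then ∏ j ∈ Finset.univ.erase (0 : Fin k), z (g j) else 0)
      = ∑ g : Fin k → Fin n, ∏ j : Fin k, (fun (j : Fin k) (v : Fin n) =>
            if j = 0 then (if v = i then (1:ℝ) else 0) else z v) j (g j) :=
        Finset.sum_congr rfl fun g _ => key g
    _ = ∏ j : Fin k, ∑ v : Fin n, (fun (j : Fin k) (v : Fin n) =>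
            if j = 0 then (if v = i then (1:ℝ) else 0) else z v) j v := by
        rw [Finset.prod_univ_sum]
        rw [← Fintype.piFinset_univ]
    _ = (∑ v, z v) ^ (k - 1) := by
        rw [← Finset.prod_erase_mul (a := (0 : Fin k)) (h := mem_univ 0)]
        simp only [if_pos rfl]
        have h1 : ∏ j ∈ (univ : Finset (Fin k)).erase 0, ∑ v : Fin n,
            (if j = 0 then (if v = i then (1:ℝ) else 0) else z v) = (∑ v, z v) ^ (k-1) := by
          rw [← card_erase_zero (k := k), ← Finset.prod_const]
          apply Finset.prod_congr rfl; intro j hj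
          apply Finset.sum_congr rfl; intro v _
          simp [(Finset.mem_erase.mp hj).1]
        rw [h1]
        simp
end Basics

section Basics2
variable {n k : ℕ} [NeZero k]

lemma tapply_le_rowbound (T : (Fin k → Fin n) → ℝ) (hT : ∀ f, 0 ≤ T f)
    (z : Fin n → ℝ) (hz : ∀ v, 0 ≤ z v) {c : ℝ} (hc : ∀ v, z v ≤ c) (i : Fin n) :
    tapply T z i ≤ (∑ g : Fin k → Fin n, T g) * c ^ (k - 1) := by
  have hc0 : 0 ≤ c := le_trans (hz i) (hc i)
  calc tapply T z i ≤ ∑ g : Fin k → Fin n, T g * c ^ (k - 1) := by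
        apply Finset.sum_le_sum
        intro g _
        split
        · apply mul_le_mul_of_nonneg_left _ (hT g)
          calc ∏ j ∈ Finset.univ.erase (0 : Fin k), z (g j)
              ≤ ∏ j ∈ Finset.univ.erase (0 : Fin k), c :=
                Finset.prod_le_prod (fun j _ => hz _) (fun j _ => hc _)
            _ = c ^ (k - 1) := by rw [Finset.prod_const, card_erase_zero]
        · exact mul_nonneg (hT g) (pow_nonneg hc0 _)
    _ = (∑ g : Fin k → Fin n, T g) * c ^ (k - 1) := by rw [Finset.sum_mul]

lemma tapply_continuous (T : (Fin k → Fin n) → ℝ) (i : Fin n) :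
    Continuous fun z : Fin n → ℝ => tapply T z i := by
  apply continuous_finset_sum
  intro g _
  by_cases h : g 0 = i
  · simp only [if_pos h]
    exact continuous_const.mul (continuous_finset_prod _ fun j _ => continuous_apply _)
  · simp only [if_neg h]
    exact continuous_const

lemma tapply_add_const (T : (Fin k → Fin n) → ℝ) (ε : ℝ) (z : Fin n → ℝ) (i : Fin n) :
    tapply (fun g => T g + ε) z i = tapply T z i + ε * (∑ v, z v) ^ (k - 1) := by
  unfold tapply
  rw [← sum_prod_eq z i, Finset.mul_sum, ← Finset.sum_add_distrib]
  apply Finset.sum_congr rfl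
  intro g _
  by_cases h : g 0 = i <;> simp [h] <;> ring

lemma abs_tapply_le (T : (Fin k → Fin n) → ℝ) (hT : ∀ f, 0 ≤ T f) (z : Fin n → ℝ) (i : Fin n) :
    |tapply T z i| ≤ tapply T (fun v => |z v|) i := by
  calc |tapply T z i| ≤ ∑ g : Fin k → Fin n,
        |if g 0 = i then T g * ∏ j ∈ Finset.univ.erase (0 : Fin k), z (g j) else 0| :=
        Finset.abs_sum_le_sum_abs _ _
    _ = tapply T (fun v => |z v|) i := by
        apply Finset.sum_congr rfl
        intro g _
        by_cases h : g 0 = i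
        · simp only [if_pos h, abs_mul, abs_of_nonneg (hT g), Finset.abs_prod]
        · simp [h]

lemma prod_eq_of_le_of_pos {s : Finset (Fin k)} {a b : Fin k → ℝ}
    (ha : ∀ j ∈ s, 0 ≤ a j) (hab : ∀ j ∈ s, a j ≤ b j) (hb : ∀ j ∈ s, 0 < b j)
    (heq : ∏ j ∈ s, a j = ∏ j ∈ s, b j) : ∀ j ∈ s, a j = b j := by
  intro j hj
  by_contra hne
  have hlt : a j < b j := lt_of_le_of_ne (hab j hj) hne
  by_cases h0 : ∃ l ∈ s, a l = 0
  · obtain ⟨l, hl, hl0⟩ := h0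
    have : ∏ j ∈ s, a j = 0 := Finset.prod_eq_zero hl hl0
    rw [this] at heq
    have : 0 < ∏ j ∈ s, b j := Finset.prod_pos hb
    linarith [heq ▸ this]
  · push_neg at h0
    have hapos : ∀ l ∈ s, 0 < a l := fun l hl => lt_of_le_of_ne (ha l hl) (Ne.symm (h0 l hl))
    have : ∏ l ∈ s, a l < ∏ l ∈ s, b l :=
      Finset.prod_lt_prod hapos hab ⟨j, hj, hlt⟩
    linarith [heq ▸ this]
end Basics2

section Spec
variable {n k : ℕ} [NeZero k]

lemma capply_ofReal (T : (Fin k → Fin n) → ℝ) (x : Fin n → ℝ) (i : Fin n) :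
    capply T (fun j => (x j : ℂ)) i = ((tapply T x i : ℝ) : ℂ) := by
  unfold capply tapply
  push_cast
  apply Finset.sum_congr rfl
  intro g _
  by_cases h : g 0 = i <;> simp [h]

lemma real_eigen_mem_modSet (T : (Fin k → Fin n) → ℝ) {l : ℝ} {x : Fin n → ℝ}
    (h : IsEigenpair T l x) :
    |l| ∈ {r : ℝ | ∃ lam : ℂ, IsCEigenvalue T lam ∧ ‖lam‖ = r} := by
  refine ⟨(l : ℂ), ⟨fun j => (x j : ℂ), ?_, ?_⟩, by rw [Complex.norm_real, Real.norm_eq_abs]⟩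
  · intro hc
    apply h.1
    funext j
    have := congrFun hc j
    simpa using this
  · funext i
    rw [capply_ofReal, congrFun h.2 i]
    push_cast
    ring

lemma bddAbove_modSet (T : (Fin k → Fin n) → ℝ) (hT : ∀ f, 0 ≤ T f) (hn : 0 < n) :
    ∀ r ∈ {r : ℝ | ∃ lam : ℂ, IsCEigenvalue T lam ∧ ‖lam‖ = r},
      r ≤ ∑ g : Fin k → Fin n, T g := by
  rintro r ⟨lam, ⟨xc, hxc0, heig⟩, rfl⟩
  have : Nonempty (Fin n) := ⟨⟨0, hn⟩⟩
  obtain ⟨i0, -, hmax⟩ := Finset.exists_max_image (univ : Finset (Fin n))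
    (fun i => ‖xc i‖) univ_nonempty
  have hc : 0 < ‖xc i0‖ := by
    obtain ⟨j, hj⟩ := Function.ne_iff.mp hxc0
    calc (0:ℝ) < ‖xc j‖ := by
          exact norm_pos_iff.mpr (by simpa using hj)
      _ ≤ ‖xc i0‖ := hmax j (mem_univ j)
  have key : ‖lam‖ * ‖xc i0‖ ^ (k - 1)
      ≤ (∑ g : Fin k → Fin n, T g) * ‖xc i0‖ ^ (k - 1) := by
    have h1 : ‖lam‖ * ‖xc i0‖ ^ (k - 1)
        = ‖capply T xc i0‖ := by
      rw [congrFun heig i0]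
      rw [norm_mul, norm_pow]
    rw [h1]
    calc ‖capply T xc i0‖
        ≤ ∑ g : Fin k → Fin n, ‖
            (if g 0 = i0 then (T g : ℂ) * ∏ j ∈ Finset.univ.erase (0 : Fin k), xc (g j) else 0)‖ :=
          norm_sum_le _ _
      _ ≤ ∑ g : Fin k → Fin n, T g * ‖xc i0‖ ^ (k - 1) := by
          apply Finset.sum_le_sum
          intro g _
          by_cases h : g 0 = i0
          · rw [if_pos h, norm_mul, Complex.norm_real, Real.norm_of_nonneg (hT g),
              norm_prod]
            apply mul_le_mul_of_nonneg_left _ (hT g)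
            calc ∏ j ∈ Finset.univ.erase (0 : Fin k), ‖xc (g j)‖
                ≤ ∏ j ∈ Finset.univ.erase (0 : Fin k), ‖xc i0‖ :=
                  Finset.prod_le_prod (fun j _ => (norm_nonneg _))
                    (fun j _ => hmax (g j) (mem_univ _))
              _ = ‖xc i0‖ ^ (k - 1) := by
                  rw [Finset.prod_const, card_erase_zero]
          · simp only [if_neg h, norm_zero]
            exact mul_nonneg (hT g) (pow_nonneg (norm_nonneg _) _)
      _ = (∑ g : Fin k → Fin n, T g) * ‖xc i0‖ ^ (k - 1) := by
          rw [Finset.sum_mul]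
  exact le_of_mul_le_mul_right key (pow_pos hc _)

lemma real_eigen_le_specRad (T : (Fin k → Fin n) → ℝ) (hT : ∀ f, 0 ≤ T f) (hn : 0 < n)
    {l : ℝ} {x : Fin n → ℝ} (h : IsEigenpair T l x) : |l| ≤ specRad T := by
  apply le_csSup ⟨_, fun r hr => bddAbove_modSet T hT hn r hr⟩
  exact real_eigen_mem_modSet T h

lemma specRad_nonneg (T : (Fin k → Fin n) → ℝ) (hT : ∀ f, 0 ≤ T f) (hn : 0 < n)
    {x : Fin n → ℝ} (h : IsEigenpair T (specRad T) x) : 0 ≤ specRad T := by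
  have := real_eigen_le_specRad T hT hn h
  have h2 := le_abs_self (specRad T)
  linarith [abs_nonneg (specRad T)]
end Spec

section Perron
variable {n k : ℕ} [NeZero k]

lemma const_le_tapply (B : (Fin k → Fin n) → ℝ) {εB : ℝ} (hεB : 0 ≤ εB)
    (hBc : ∀ g, εB ≤ B g) (z : Fin n → ℝ) (hz : ∀ v, 0 ≤ z v) (i : Fin n) :
    εB * (∑ v, z v) ^ (k - 1) ≤ tapply B z i := by
  have h1 := tapply_add_const (fun g => B g - εB) εB z i
  have h2 : (fun g => (B g - εB) + εB) = B := by funext g; ring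
  rw [h2] at h1
  have h3 : 0 ≤ tapply (fun g => B g - εB) z i :=
    tapply_nonneg _ (fun g => by linarith [hBc g]) z hz i
  linarith

lemma cert_le_RB (B : (Fin k → Fin n) → ℝ) (hBpos : ∀ g, 0 ≤ B g) (hn : 0 < n)
    {z : Fin n → ℝ} {l : ℝ} (hz : ∀ v, 0 ≤ z v) (hsum : ∑ v, z v = 1)
    (hcert : ∀ i, l * z i ^ (k - 1) ≤ tapply B z i) :
    l ≤ ∑ g : Fin k → Fin n, B g := by
  have : Nonempty (Fin n) := ⟨⟨0, hn⟩⟩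
  obtain ⟨i0, -, hmax⟩ := Finset.exists_max_image (univ : Finset (Fin n)) z univ_nonempty
  have hz0 : 0 < z i0 := by
    by_contra h
    push_neg at h
    have : ∑ v, z v ≤ 0 :=
      Finset.sum_nonpos fun v _ => le_trans (hmax v (mem_univ v)) h
    linarith
  have h1 := hcert i0
  have h2 := tapply_le_rowbound B hBpos z hz (c := z i0) (fun v => hmax v (mem_univ v)) i0
  exact le_of_mul_le_mul_right (by linarith) (pow_pos hz0 _)

lemma tapply_bump_ge (B : (Fin k → Fin n) → ℝ) {εB : ℝ} (hεB : 0 ≤ εB)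
    (hBc : ∀ g, εB ≤ B g) (z : Fin n → ℝ) (hz : ∀ v, 0 ≤ z v) (i : Fin n)
    {δ : ℝ} (hδ : 0 ≤ δ) (j : Fin n) :
    tapply B z j + εB * ((z i + δ) ^ (k - 1) - z i ^ (k - 1))
      ≤ tapply B (fun v => z v + if v = i then δ else 0) j := by
  classical
  set z' : Fin n → ℝ := fun v => z v + if v = i then δ else 0 with hz'def
  have hzz' : ∀ v, z v ≤ z' v := by
    intro v
    simp only [hz'def]
    split <;> simp [hδ]
  have hz'i : z' i = z i + δ := by simp [hz'def]
  set F : (Fin k → Fin n) → ℝ := fun g =>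
    if g 0 = j then B g * ∏ l ∈ Finset.univ.erase (0 : Fin k), z (g l) else 0 with hF
  set F' : (Fin k → Fin n) → ℝ := fun g =>
    if g 0 = j then B g * ∏ l ∈ Finset.univ.erase (0 : Fin k), z' (g l) else 0 with hF'
  set g0 : Fin k → Fin n := fun l => if l = 0 then j else i with hg0
  have hg00 : g0 0 = j := by simp [hg0]
  have hFg0 : F g0 = B g0 * z i ^ (k - 1) := by
    have h1 : F g0 = B g0 * ∏ l ∈ Finset.univ.erase (0 : Fin k), z (g0 l) := if_pos hg00
    rw [h1, ← card_erase_zero (k := k), ← Finset.prod_const]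
    congr 1
    apply Finset.prod_congr rfl
    intro l hl
    simp [hg0, (Finset.mem_erase.mp hl).1]
  have hF'g0 : F' g0 = B g0 * (z i + δ) ^ (k - 1) := by
    have h1 : F' g0 = B g0 * ∏ l ∈ Finset.univ.erase (0 : Fin k), z' (g0 l) := if_pos hg00
    rw [h1, ← card_erase_zero (k := k), ← Finset.prod_const]
    congr 1
    apply Finset.prod_congr rfl
    intro l hl
    have : g0 l = i := by simp [hg0, (Finset.mem_erase.mp hl).1]
    rw [this, hz'i]
  have hFF' : ∀ g, F g ≤ F' g := by
    intro g
    rw [hF, hF']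
    by_cases h : g 0 = j
    · simp only [if_pos h]
      exact mul_le_mul_of_nonneg_left
        (Finset.prod_le_prod (fun l _ => hz _) (fun l _ => hzz' _)) (le_trans hεB (hBc g))
    · simp [h]
  have key : F g0 + εB * ((z i + δ) ^ (k - 1) - z i ^ (k - 1)) ≤ F' g0 := by
    rw [hFg0, hF'g0]
    have hpow : z i ^ (k - 1) ≤ (z i + δ) ^ (k - 1) :=
      pow_le_pow_left₀ (hz i) (by linarith) _
    nlinarith [hBc g0]
  have hsplit : tapply B z j = F g0 + ∑ g ∈ (univ : Finset (Fin k → Fin n)).erase g0, F g := by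
    rw [Finset.add_sum_erase _ F (mem_univ g0)]
    rfl
  have hsplit' : tapply B z' j = F' g0 + ∑ g ∈ (univ : Finset (Fin k → Fin n)).erase g0, F' g := by
    rw [Finset.add_sum_erase _ F' (mem_univ g0)]
    rfl
  rw [hsplit, hsplit']
  have := Finset.sum_le_sum (s := (univ : Finset (Fin k → Fin n)).erase g0)
    (fun g _ => hFF' g)
  linarith
end Perron

section Perron2
variable {n k : ℕ} [NeZero k]

theorem perron_positive (B : (Fin k → Fin n) → ℝ) {εB : ℝ} (hεB : 0 < εB)
    (hBc : ∀ g, εB ≤ B g) (hk : 2 ≤ k) (hn : 0 < n) :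
    ∃ (l : ℝ) (z : Fin n → ℝ), 0 ≤ l ∧ (∀ i, 0 < z i) ∧ (∑ v, z v) = 1 ∧
      (∀ i, tapply B z i = l * z i ^ (k - 1)) := by
  classical
  have hBpos : ∀ g, 0 ≤ B g := fun g => le_trans hεB.le (hBc g)
  set RB : ℝ := ∑ g : Fin k → Fin n, B g with hRB
  have hRB0 : 0 ≤ RB := Finset.sum_nonneg fun g _ => hBpos g
  have hne : Nonempty (Fin n) := ⟨⟨0, hn⟩⟩
  -- the feasible set
  set K : Set (ℝ × (Fin n → ℝ)) := {p | 0 ≤ p.1 ∧ (∀ i, 0 ≤ p.2 i) ∧ (∑ v, p.2 v) = 1 ∧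
      ∀ i, p.1 * p.2 i ^ (k - 1) ≤ tapply B p.2 i} with hK
  -- membership rebuilder
  have memK : ∀ l (z : Fin n → ℝ), 0 ≤ l → (∀ i, 0 ≤ z i) → (∑ v, z v) = 1 →
      (∀ i, l * z i ^ (k - 1) ≤ tapply B z i) → (l, z) ∈ K := by
    intro l z h1 h2 h3 h4
    exact ⟨h1, h2, h3, h4⟩
  -- K is compact
  have hKsub : K ⊆ (Set.Icc 0 RB) ×ˢ (Set.Icc (0 : Fin n → ℝ) 1) := by
    rintro ⟨l, z⟩ ⟨h1, h2, h3, h4⟩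
    refine ⟨⟨h1, cert_le_RB B hBpos hn h2 h3 h4⟩, ?_, ?_⟩
    · intro i; exact h2 i
    · intro i
      calc z i ≤ ∑ v, z v := Finset.single_le_sum (fun v _ => h2 v) (mem_univ i)
        _ = 1 := h3
  have hKclosed : IsClosed K := by
    have c1 : IsClosed {p : ℝ × (Fin n → ℝ) | 0 ≤ p.1} :=
      isClosed_le continuous_const continuous_fst
    have c2 : IsClosed {p : ℝ × (Fin n → ℝ) | ∀ i, 0 ≤ p.2 i} := by
      rw [Set.setOf_forall]
      exact isClosed_iInter fun i =>
        isClosed_le continuous_const ((continuous_apply i).comp continuous_snd)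
    have c3 : IsClosed {p : ℝ × (Fin n → ℝ) | (∑ v, p.2 v) = 1} :=
      isClosed_eq (continuous_finset_sum _ fun i _ => (continuous_apply i).comp continuous_snd) continuous_const
    have c4 : IsClosed {p : ℝ × (Fin n → ℝ) | ∀ i, p.1 * p.2 i ^ (k - 1) ≤ tapply B p.2 i} := by
      rw [Set.setOf_forall]
      refine isClosed_iInter fun i => isClosed_le ?_ ?_
      · exact continuous_fst.mul (((continuous_apply i).comp continuous_snd).pow _)
      · exact (tapply_continuous B i).comp continuous_snd
    exact c1.inter (c2.inter (c3.inter c4))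
  have hKcompact : IsCompact K :=
    IsCompact.of_isClosed_subset ((isCompact_Icc).prod (isCompact_Icc)) hKclosed hKsub
  have hnR : (0:ℝ) < n := by exact_mod_cast hn
  have hKne : K.Nonempty := by
    refine ⟨(0, fun _ => 1/n), memK 0 _ le_rfl (fun i => by positivity) ?_ ?_⟩
    · rw [Finset.sum_const, Finset.card_univ, Fintype.card_fin, nsmul_eq_mul]
      field_simp
    · intro i
      simpa using tapply_nonneg B hBpos _ (fun v => by positivity) i
  obtain ⟨p, hpK, hpmax⟩ := hKcompact.exists_isMaxOn hKne continuous_fst.continuousOn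
  obtain ⟨hl0, hz0, hzsum, hcert⟩ := hpK
  set l : ℝ := p.1 with hldef
  set z : Fin n → ℝ := p.2 with hzdef
  have hlRB : l ≤ RB := cert_le_RB B hBpos hn hz0 hzsum hcert
  have hz1 : ∀ v, z v ≤ 1 := by
    intro v
    calc z v ≤ ∑ u, z u := Finset.single_le_sum (fun u _ => hz0 u) (mem_univ v)
      _ = 1 := hzsum
  have hkm1 : k - 1 ≠ 0 := by omega
  -- the contradiction builder
  have contra : ∀ (γ : ℝ) (z' : Fin n → ℝ), 0 < γ → (∀ v, 0 ≤ z' v) → 0 < (∑ v, z' v) →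
      (∀ j, (l + γ) * z' j ^ (k - 1) ≤ tapply B z' j) → False := by
    intro γ z' hγ hz'0 hs hcert'
    set s := ∑ v, z' v with hs_def
    have hwsum : ∑ v, (1/s) * z' v = 1 := by
      rw [← Finset.mul_sum, ← hs_def]
      field_simp
    have hwcert : ∀ j, (l + γ) * ((1/s) * z' j) ^ (k - 1) ≤ tapply B (fun v => (1/s) * z' v) j := by
      intro j
      rw [tapply_smul B (1/s) z' j, mul_pow]
      have hpos : (0:ℝ) < (1/s)^(k-1) := pow_pos (by positivity) _
      calc (l + γ) * ((1/s)^(k-1) * z' j ^ (k-1))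
          = (1/s)^(k-1) * ((l + γ) * z' j^(k-1)) := by ring
        _ ≤ (1/s)^(k-1) * tapply B z' j :=
            mul_le_mul_of_nonneg_left (hcert' j) hpos.le
    have hmem : ((l + γ), fun v => (1/s) * z' v) ∈ K :=
      memK _ _ (by linarith) (fun v => mul_nonneg (by positivity) (hz'0 v)) hwsum hwcert
    have hle : l + γ ≤ l := hpmax hmem
    linarith
  -- step (a): positivity of the maximizer
  have hzpos : ∀ i, 0 < z i := by
    intro i
    rcases lt_or_eq_of_le (hz0 i) with h | h
    · exact h
    have hzi : z i = 0 := h.symm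
    exfalso
    set δ : ℝ := min 1 (εB / (RB+1)) with hδdef
    have hδ0 : 0 < δ := lt_min one_pos (div_pos hεB (by linarith))
    have hδ1 : δ ≤ 1 := min_le_left _ _
    have hδpow : δ^(k-1) ≤ εB/(RB+1) :=
      le_trans (pow_le_of_le_one hδ0.le hδ1 hkm1) (min_le_right _ _)
    set γ : ℝ := min 1 (εB * δ^(k-1)) with hγdef
    have hγ0 : 0 < γ := lt_min one_pos (by positivity)
    have hγ1 : γ ≤ 1 := min_le_left _ _
    set z' : Fin n → ℝ := fun v => z v + if v = i then δ else 0 with hz'def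
    have hz'0 : ∀ v, 0 ≤ z' v := by
      intro v
      have := hz0 v
      simp only [hz'def]
      split <;> [linarith; linarith]
    have hzz' : ∀ v, z v ≤ z' v := by
      intro v
      simp only [hz'def]
      split <;> [linarith; linarith]
    have hz'sum : ∑ v, z' v = 1 + δ := by
      simp only [hz'def]
      rw [Finset.sum_add_distrib, hzsum, Finset.sum_ite_eq' univ i (fun _ => δ),
        if_pos (mem_univ i)]
    refine contra γ z' hγ0 hz'0 (by rw [hz'sum]; linarith) ?_
    intro j
    by_cases hj : j = i
    · subst hj
      have hz'j : z' j = δ := by simp [hz'def, hzi]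
      rw [hz'j]
      have h1 : (l + γ) * δ^(k-1) ≤ (RB + 1) * δ^(k-1) := by
        apply mul_le_mul_of_nonneg_right (by linarith) (by positivity)
      have h2 : (RB + 1) * δ^(k-1) ≤ εB := by
        calc (RB + 1) * δ^(k-1) ≤ (RB + 1) * (εB/(RB+1)) :=
              mul_le_mul_of_nonneg_left hδpow (by linarith)
          _ = εB := by field_simp
      have h3 : εB ≤ tapply B z j := by
        have := const_le_tapply B hεB.le hBc z hz0 j
        rwa [hzsum, one_pow, mul_one] at this
      have h4 : tapply B z j ≤ tapply B z' j := tapply_mono B hBpos hz0 hzz' j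
      linarith
    · have hz'j : z' j = z j := by simp [hz'def, hj]
      rw [hz'j]
      have h1 : γ * z j ^ (k-1) ≤ εB * δ^(k-1) := by
        calc γ * z j ^ (k-1) ≤ γ * 1 :=
              mul_le_mul_of_nonneg_left (pow_le_one₀ (hz0 j) (hz1 j)) hγ0.le
          _ ≤ εB * δ^(k-1) := by rw [mul_one]; exact min_le_right _ _
      have h2 := tapply_bump_ge B hεB.le hBc z hz0 i hδ0.le j
      rw [hzi] at h2
      rw [zero_add, zero_pow hkm1, sub_zero] at h2
      have := hcert j
      nlinarith
  -- step (b): the maximizer is an eigenpair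
  refine ⟨l, z, hl0, hzpos, hzsum, fun i => ?_⟩
  by_contra hne'
  have hslack : l * z i ^ (k-1) < tapply B z i := lt_of_le_of_ne (hcert i) (Ne.symm hne')
  set si : ℝ := tapply B z i - l * z i ^ (k-1) with hsidef
  have hsi0 : 0 < si := by simp only [hsidef]; linarith
  have hcont : ContinuousAt (fun δ : ℝ => (l + εB * δ^(k-1)) * (z i + δ)^(k-1)) 0 :=
    (((continuous_const.add (continuous_const.mul (continuous_id.pow _))).mul
      ((continuous_const.add continuous_id).pow _))).continuousAt
  have hval : (l + εB * (0:ℝ)^(k-1)) * (z i + 0)^(k-1) < l * z i ^ (k-1) + si := by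
    rw [zero_pow hkm1, mul_zero, add_zero, add_zero]
    linarith
  have hev : ∀ᶠ δ in nhds (0:ℝ),
      (l + εB * δ^(k-1)) * (z i + δ)^(k-1) < l * z i ^ (k-1) + si :=
    hcont.eventually_lt continuousAt_const hval
  have hev2 : ∀ᶠ δ in nhdsWithin (0:ℝ) (Set.Ioi 0),
      ((l + εB * δ^(k-1)) * (z i + δ)^(k-1) < l * z i ^ (k-1) + si ∧ δ ∈ Set.Ioi (0:ℝ)) :=
    (hev.filter_mono nhdsWithin_le_nhds).and self_mem_nhdsWithin
  obtain ⟨δ, hδlt, hδpos'⟩ := hev2.exists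
  have hδ0 : 0 < δ := hδpos'
  set γ : ℝ := εB * δ^(k-1) with hγdef
  have hγ0 : 0 < γ := by positivity
  set z' : Fin n → ℝ := fun v => z v + if v = i then δ else 0 with hz'def
  have hz'0 : ∀ v, 0 ≤ z' v := by
    intro v
    have := hz0 v
    simp only [hz'def]
    split <;> [linarith; linarith]
  have hzz' : ∀ v, z v ≤ z' v := by
    intro v
    simp only [hz'def]
    split <;> [linarith; linarith]
  have hz'sum : ∑ v, z' v = 1 + δ := by
    simp only [hz'def]
    rw [Finset.sum_add_distrib, hzsum, Finset.sum_ite_eq' univ i (fun _ => δ),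
      if_pos (mem_univ i)]
  refine contra γ z' hγ0 hz'0 (by rw [hz'sum]; linarith) ?_
  intro j
  by_cases hj : j = i
  · subst hj
    have hz'j : z' j = z j + δ := by simp [hz'def]
    rw [hz'j]
    have h4 : tapply B z j ≤ tapply B z' j := tapply_mono B hBpos hz0 hzz' j
    have : tapply B z j = l * z j ^ (k-1) + si := by simp only [hsidef]; ring
    have : (l + γ) * (z j + δ)^(k-1) < tapply B z' j := by
      calc (l + γ) * (z j + δ)^(k-1) < l * z j ^ (k-1) + si := hδlt
        _ = tapply B z j := this.symm
        _ ≤ tapply B z' j := h4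
    exact this.le
  · have hz'j : z' j = z j := by simp [hz'def, hj]
    rw [hz'j]
    have h1 : γ * z j ^ (k-1) ≤ εB * δ^(k-1) := by
      calc γ * z j ^ (k-1) ≤ γ * 1 :=
            mul_le_mul_of_nonneg_left (pow_le_one₀ (hz0 j) (hz1 j)) hγ0.le
        _ = εB * δ^(k-1) := by rw [mul_one]
    have hsup : z i ^(k-1) + δ^(k-1) ≤ (z i + δ)^(k-1) :=
      pow_add_pow_le (hz0 i) hδ0.le hkm1
    have h2 := tapply_bump_ge B hεB.le hBc z hz0 i hδ0.le j
    have := hcert j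
    nlinarith
end Perron2

section Compare
variable {n k : ℕ} [NeZero k]

lemma tapply_tensor_mono {T B : (Fin k → Fin n) → ℝ} (hTB : ∀ g, T g ≤ B g)
    (hT : ∀ g, 0 ≤ T g) {z : Fin n → ℝ} (hz : ∀ v, 0 ≤ z v) (i : Fin n) :
    tapply T z i ≤ tapply B z i := by
  apply Finset.sum_le_sum
  intro g _
  split
  · exact mul_le_mul_of_nonneg_right (hTB g) (Finset.prod_nonneg fun j _ => hz _)
  · exact le_rfl

lemma cert_le_eigen (B : (Fin k → Fin n) → ℝ) (hBpos : ∀ g, 0 ≤ B g) (hn : 0 < n)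
    {l : ℝ} {z : Fin n → ℝ} (hzpos : ∀ i, 0 < z i)
    (heig : ∀ i, tapply B z i = l * z i ^ (k - 1))
    {μ : ℝ} {y : Fin n → ℝ} (hy0 : ∀ i, 0 ≤ y i) (hyne : ∃ i, 0 < y i)
    (hcert : ∀ i, μ * y i ^ (k - 1) ≤ tapply B y i) : μ ≤ l := by
  have : Nonempty (Fin n) := ⟨⟨0, hn⟩⟩
  obtain ⟨i0, -, hmax⟩ := Finset.exists_max_image (univ : Finset (Fin n))
    (fun i => y i / z i) univ_nonempty
  set t := y i0 / z i0 with htdef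
  have ht0 : 0 < t := by
    obtain ⟨j, hj⟩ := hyne
    calc (0:ℝ) < y j / z j := div_pos hj (hzpos j)
      _ ≤ t := hmax j (mem_univ j)
  have hyt : ∀ v, y v ≤ t * z v := by
    intro v
    have h1 : y v / z v ≤ t := hmax v (mem_univ v)
    calc y v = (y v / z v) * z v := by
          rw [div_mul_cancel₀]
          exact (hzpos v).ne'
      _ ≤ t * z v := mul_le_mul_of_nonneg_right h1 (hzpos v).le
  have hyi0 : y i0 = t * z i0 := by
    rw [htdef, div_mul_cancel₀]
    exact (hzpos i0).ne'
  have hchain : μ * y i0 ^ (k-1) ≤ l * y i0 ^ (k-1) := by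
    calc μ * y i0 ^ (k-1) ≤ tapply B y i0 := hcert i0
      _ ≤ tapply B (fun v => t * z v) i0 := tapply_mono B hBpos hy0 hyt i0
      _ = t ^ (k-1) * tapply B z i0 := tapply_smul B t z i0
      _ = t ^ (k-1) * (l * z i0 ^ (k-1)) := by rw [heig i0]
      _ = l * (t * z i0) ^ (k-1) := by rw [mul_pow]; ring
      _ = l * y i0 ^ (k-1) := by rw [← hyi0]
  have hyi0pos : 0 < y i0 ^ (k-1) := by
    rw [hyi0]
    exact pow_pos (mul_pos ht0 (hzpos i0)) _
  have := mul_le_mul_of_nonneg_right (le_refl (1:ℝ)) hyi0pos.le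
  nlinarith

lemma chain_bound {α : Type*} {r : α → α → Prop} {i j : α}
    (h : Relation.ReflTransGen r i j) (d : ℕ) :
    ∃ E : ℕ, 1 ≤ E ∧ ∀ (u : α → ℝ) (C : ℝ), 1 ≤ C → (∀ v, 1 ≤ u v) →
      (∀ a b, r a b → u b ≤ C * u a ^ d) → u j ≤ (C * u i) ^ E := by
  induction h with
  | refl =>
    refine ⟨1, le_rfl, fun u C hC hu harc => ?_⟩
    have := hu i
    nlinarith
  | @tail b c hpath harc ih =>
    obtain ⟨E, hE1, hEb⟩ := ih
    refine ⟨E * (d + 2), Nat.one_le_iff_ne_zero.mpr (by positivity), fun u C hC hu harc2 => ?_⟩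
    have hbase : (1:ℝ) ≤ C * u i := by nlinarith [hu i]
    have h1 : u c ≤ C * u b ^ d := harc2 _ _ harc
    have h2 : u b ≤ (C * u i) ^ E := hEb u C hC hu harc2
    have h3 : u b ^ d ≤ ((C * u i) ^ E) ^ d := by
      apply pow_le_pow_left₀ (by linarith [hu b]) h2
    have h4 : C * u b ^ d ≤ C * (C * u i) ^ (E * d) := by
      rw [← pow_mul] at h3
      exact mul_le_mul_of_nonneg_left h3 (by linarith)
    have h5 : C * (C * u i) ^ (E * d) ≤ (C * u i) ^ (E * d + 1) := by
      rw [pow_succ]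
      have h6 : (1:ℝ) ≤ (C * u i) ^ (E * d) := one_le_pow₀ hbase
      nlinarith [hu i, mul_le_mul_of_nonneg_right
        (show C ≤ C * u i by nlinarith [hu i]) (le_trans zero_le_one h6)]
    have h7 : (C * u i) ^ (E * d + 1) ≤ (C * u i) ^ (E * (d + 2)) :=
      pow_le_pow_right₀ hbase (by nlinarith)
    linarith
end Compare

section Uniform
variable {n k : ℕ} [NeZero k]

lemma uniform_lower (T : (Fin k → Fin n) → ℝ) (hT : ∀ g, 0 ≤ T g)
    (hirr : WeaklyIrreducible T) (hk : 2 ≤ k) (hn2 : 2 ≤ n) {R' : ℝ}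
    (hR'0 : 0 ≤ R') (hrow : ∀ g, T g ≤ R') :
    ∃ β : ℝ, 0 < β ∧ ∀ (B : (Fin k → Fin n) → ℝ) (l : ℝ) (z : Fin n → ℝ),
      (∀ g, T g ≤ B g) → (∀ i, 0 < z i) → (∑ v, z v) = 1 → l ≤ R' →
      (∀ i, tapply B z i = l * z i ^ (k - 1)) → ∀ v, β ≤ z v := by
  classical
  have hne : Nonempty (Fin n) := ⟨⟨0, by omega⟩⟩
  -- positive entries exist
  have hPne : (univ.filter (fun g : Fin k → Fin n => 0 < T g)).Nonempty := by
    have h01 : (⟨0, by omega⟩ : Fin n) ≠ ⟨1, by omega⟩ := by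
      intro h
      simpa using congrArg Fin.val h
    rcases (hirr ⟨0, by omega⟩ ⟨1, by omega⟩).cases_head with h | ⟨c, harc, -⟩
    · exact absurd h h01
    · obtain ⟨g, -, hg, -⟩ := harc
      exact ⟨g, Finset.mem_filter.mpr ⟨mem_univ g, hg⟩⟩
  set τ : ℝ := Finset.min' ((univ.filter (fun g : Fin k → Fin n => 0 < T g)).image T)
    (hPne.image T) with hτdef
  have hτpos : 0 < τ := by
    obtain ⟨g, hgmem, hgeq⟩ := Finset.mem_image.mp (Finset.min'_mem _ (hPne.image T))
    rw [hτdef, ← hgeq]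
    exact (Finset.mem_filter.mp hgmem).2
  have hτle : ∀ g, 0 < T g → τ ≤ T g := by
    intro g hg
    exact Finset.min'_le _ _ (Finset.mem_image_of_mem T (Finset.mem_filter.mpr ⟨mem_univ g, hg⟩))
  set C : ℝ := max 1 (R' / τ) with hCdef
  have hC1 : (1:ℝ) ≤ C := le_max_left _ _
  -- choose exponents for all pairs
  have hallE := fun i j => chain_bound (r := tensorArc T) (hirr i j) (k - 1)
  choose E hE1 hEbd using hallE
  set Emax : ℕ := Finset.sup univ (fun i : Fin n => Finset.sup univ (fun j : Fin n => E i j))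
    with hEmax
  have hEle : ∀ i j, E i j ≤ Emax := fun i j =>
    le_trans (Finset.le_sup (f := fun j => E i j) (mem_univ j))
      (Finset.le_sup (f := fun i => univ.sup (fun j => E i j)) (mem_univ i))
  have hCpow : (0:ℝ) < C ^ Emax := pow_pos (by linarith) _
  refine ⟨1 / (n * C ^ Emax), by positivity, ?_⟩
  intro B l z hTB hzpos hzsum hlR' heig
  obtain ⟨imin, -, hminle⟩ := Finset.exists_min_image (univ : Finset (Fin n)) z univ_nonempty
  set εz := z imin with hεzdef
  have hεzpos : 0 < εz := hzpos imin
  set u : Fin n → ℝ := fun v => z v / εz with hudef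
  have hu1 : ∀ v, 1 ≤ u v := fun v => (one_le_div hεzpos).mpr (hminle v (mem_univ v))
  have huimin : u imin = 1 := div_self hεzpos.ne'
  -- arc bound
  have harcbd : ∀ a b, tensorArc T a b → u b ≤ C * u a ^ (k - 1) := by
    rintro a b ⟨g, hg0, hgpos, l0, hl00, hgl0⟩
    have hl0mem : l0 ∈ (univ : Finset (Fin k)).erase 0 := Finset.mem_erase.mpr ⟨hl00, mem_univ _⟩
    have hprod : z (g l0) * εz ^ (k - 2)
        ≤ ∏ j ∈ (univ : Finset (Fin k)).erase 0, z (g j) := by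
      rw [← Finset.mul_prod_erase _ _ hl0mem]
      apply mul_le_mul_of_nonneg_left _ (hzpos (g l0)).le
      have hcard : (((univ : Finset (Fin k)).erase 0).erase l0).card = k - 2 := by
        rw [Finset.card_erase_of_mem (Finset.mem_erase.mpr ⟨hl00, mem_univ _⟩), card_erase_zero]
        omega
      calc εz ^ (k-2) = ∏ _j ∈ ((univ : Finset (Fin k)).erase 0).erase l0, εz := by
            rw [Finset.prod_const, hcard]
        _ ≤ ∏ j ∈ ((univ : Finset (Fin k)).erase 0).erase l0, z (g j) :=
            Finset.prod_le_prod (fun _ _ => hεzpos.le) (fun j _ => hminle _ (mem_univ _))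
    have hkey : T g * (z (g l0) * εz ^ (k-2)) ≤ R' * z a ^ (k - 1) := by
      calc T g * (z (g l0) * εz ^ (k-2))
          ≤ T g * ∏ j ∈ (univ : Finset (Fin k)).erase 0, z (g j) :=
            mul_le_mul_of_nonneg_left hprod (hT g)
        _ ≤ tapply T z a := single_le_tapply T hT z (fun v => (hzpos v).le) g a hg0
        _ ≤ tapply B z a := tapply_tensor_mono hTB hT (fun v => (hzpos v).le) a
        _ = l * z a ^ (k-1) := heig a
        _ ≤ R' * z a ^ (k-1) := mul_le_mul_of_nonneg_right hlR' (pow_pos (hzpos a) _).le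
    have h2' : z (g l0) * εz ^ (k-2) ≤ (R' / T g) * z a ^ (k-1) := by
      rw [div_mul_eq_mul_div, le_div_iff₀ hgpos]
      calc z (g l0) * εz^(k-2) * T g = T g * (z (g l0) * εz^(k-2)) := by ring
        _ ≤ R' * z a ^ (k-1) := hkey
    have hRC : R' / T g ≤ C :=
      le_trans (div_le_div_of_nonneg_left hR'0 hτpos (hτle g hgpos)) (le_max_right _ _)
    rw [hgl0] at h2'
    have h3 : z b * εz^(k-2) ≤ C * z a^(k-1) :=
      le_trans h2' (mul_le_mul_of_nonneg_right hRC (pow_pos (hzpos a) _).le)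
    have e1 : εz ^ (k-1) = εz^(k-2) * εz := by
      rw [← pow_succ]
      congr 1
      omega
    have goal2 : z b / εz ≤ (C * z a^(k-1)) / εz^(k-1) := by
      rw [div_le_div_iff₀ hεzpos (pow_pos hεzpos _)]
      calc z b * εz^(k-1) = (z b * εz^(k-2)) * εz := by rw [e1]; ring
        _ ≤ (C * z a^(k-1)) * εz := mul_le_mul_of_nonneg_right h3 hεzpos.le
    calc u b = z b / εz := rfl
      _ ≤ (C * z a^(k-1)) / εz^(k-1) := goal2
      _ = C * (z a / εz)^(k-1) := by rw [div_pow]; ring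
      _ = C * u a ^ (k-1) := rfl
  -- conclude the uniform bound
  intro v
  have hnpos : (0:ℝ) < n := by
    have : (2:ℝ) ≤ n := by exact_mod_cast hn2
    linarith
  have hj0 : ∃ j0, 1/(n:ℝ) ≤ z j0 := by
    by_contra h
    push_neg at h
    have hlt : ∑ v, z v < ∑ _v : Fin n, 1/(n:ℝ) :=
      Finset.sum_lt_sum_of_nonempty univ_nonempty (fun v _ => h v)
    rw [Finset.sum_const, Finset.card_univ, Fintype.card_fin, nsmul_eq_mul, hzsum] at hlt
    rw [mul_one_div, div_self hnpos.ne'] at hlt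
    linarith
  obtain ⟨j0, hj0⟩ := hj0
  have hbd := hEbd imin j0 u C hC1 hu1 harcbd
  rw [huimin, mul_one] at hbd
  have hbd2 : u j0 ≤ C ^ Emax := le_trans hbd (pow_le_pow_right₀ hC1 (hEle imin j0))
  have h5 : z j0 ≤ C ^ Emax * εz := (div_le_iff₀ hεzpos).mp hbd2
  have h6 : 1/(n:ℝ) ≤ C ^ Emax * εz := le_trans hj0 h5
  have h7 : 1/((n:ℝ) * C ^ Emax) ≤ εz := by
    rw [div_le_iff₀ (by positivity)]
    have := (div_le_iff₀ hnpos).mp h6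
    nlinarith
  exact le_trans h7 (hminle v (mem_univ v))
end Uniform

section Final
variable {n k : ℕ} [NeZero k]

lemma pos_of_cert_eq_eigen (T : (Fin k → Fin n) → ℝ) (hT : ∀ g, 0 ≤ T g)
    (hirr : WeaklyIrreducible T) (hn : 0 < n)
    {ρ : ℝ} {w : Fin n → ℝ} (hwpos : ∀ i, 0 < w i)
    (hweig : ∀ i, tapply T w i = ρ * w i ^ (k - 1))
    {y : Fin n → ℝ} (hy0 : ∀ i, 0 ≤ y i) (hyne : ∃ i, 0 < y i)
    (hycert : ∀ i, ρ * y i ^ (k - 1) ≤ tapply T y i) :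
    ∀ i, 0 < y i := by
  classical
  have hne : Nonempty (Fin n) := ⟨⟨0, hn⟩⟩
  obtain ⟨i0, -, hmax⟩ := Finset.exists_max_image (univ : Finset (Fin n))
    (fun i => y i / w i) univ_nonempty
  set t := y i0 / w i0 with htdef
  have ht0 : 0 < t := by
    obtain ⟨j, hj⟩ := hyne
    calc (0:ℝ) < y j / w j := div_pos hj (hwpos j)
      _ ≤ t := hmax j (mem_univ j)
  have hyt : ∀ v, y v ≤ t * w v := by
    intro v
    have h1 : y v / w v ≤ t := hmax v (mem_univ v)
    calc y v = (y v / w v) * w v := by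
          rw [div_mul_cancel₀]
          exact (hwpos v).ne'
      _ ≤ t * w v := mul_le_mul_of_nonneg_right h1 (hwpos v).le
  have hyi0 : y i0 = t * w i0 := by
    rw [htdef, div_mul_cancel₀]
    exact (hwpos i0).ne'
  -- closure of the equality set under arcs
  have hclosed : ∀ a, y a = t * w a → ∀ g : Fin k → Fin n, g 0 = a → 0 < T g →
      ∀ l ∈ (univ : Finset (Fin k)).erase 0, y (g l) = t * w (g l) := by
    intro a ha g hg0 hgpos
    have h3 : tapply T (fun v => t * w v) a = ρ * y a ^ (k - 1) := by
      rw [tapply_smul T t w a, hweig a, ha, mul_pow]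
      ring
    have h2 : tapply T y a ≤ tapply T (fun v => t * w v) a :=
      tapply_mono T hT hy0 hyt a
    have hchain : tapply T y a = tapply T (fun v => t * w v) a := by
      have h1 : ρ * y a ^ (k - 1) ≤ tapply T y a := hycert a
      linarith
    have hterm := (Finset.sum_eq_sum_iff_of_le (s := (univ : Finset (Fin k → Fin n)))
      (f := fun g' => if g' 0 = a then T g' * ∏ j ∈ (univ : Finset (Fin k)).erase 0, y (g' j) else 0)
      (g := fun g' => if g' 0 = a then T g' * ∏ j ∈ (univ : Finset (Fin k)).erase 0, (t * w (g' j)) else 0)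
      (fun g' _ => by
        by_cases h : g' 0 = a
        · simp only [if_pos h]
          exact mul_le_mul_of_nonneg_left
            (Finset.prod_le_prod (fun j _ => hy0 _) (fun j _ => hyt _)) (hT g')
        · simp [h])).mp hchain
    have hgeq := hterm g (mem_univ g)
    rw [if_pos hg0, if_pos hg0] at hgeq
    have hprodeq : ∏ j ∈ (univ : Finset (Fin k)).erase 0, y (g j)
        = ∏ j ∈ (univ : Finset (Fin k)).erase 0, (t * w (g j)) :=
      mul_left_cancel₀ hgpos.ne' hgeq
    exact prod_eq_of_le_of_pos (fun j _ => hy0 _) (fun j _ => hyt _)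
      (fun j _ => mul_pos ht0 (hwpos _)) hprodeq
  -- propagate along paths
  have hreach : ∀ j, Relation.ReflTransGen (tensorArc T) i0 j → y j = t * w j := by
    intro j hpath
    induction hpath with
    | refl => exact hyi0
    | @tail b c hp harc ih =>
      obtain ⟨g, hg0, hgpos, l0, hl00, hgl0⟩ := harc
      have := hclosed b ih g hg0 hgpos l0 (Finset.mem_erase.mpr ⟨hl00, mem_univ _⟩)
      rwa [hgl0] at this
  intro i
  have := hreach i (hirr i0 i)
  rw [this]
  exact mul_pos ht0 (hwpos i)
end Final

/-- an eigenvector of a nonnegative weakly irreducible tensor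
corresponding to the spectral radius has no zero entries. -/
theorem specRad_eigenvector_no_zero_entries {n k : ℕ} [NeZero k]
    (T : (Fin k → Fin n) → ℝ) (hT : ∀ f, 0 ≤ T f) (hirr : WeaklyIrreducible T)
    (x : Fin n → ℝ) (hx : IsEigenpair T (specRad T) x) :
    ∀ i, x i ≠ 0 := by
  classical
  obtain ⟨hxne, heig⟩ := hx
  intro i hxi
  have hn : 0 < n := i.pos
  rcases Nat.lt_or_ge n 2 with hn1 | hn2
  · -- n = 1
    apply hxne
    funext j
    have hji : j = i := Fin.ext (by omega)
    rw [hji, hxi]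
    rfl
  · have hk2 : 2 ≤ k := by
      by_contra hk1
      have hk1' : k = 1 := by
        have := Nat.pos_of_ne_zero (NeZero.ne k)
        omega
      subst hk1'
      have h01 : (⟨0, by omega⟩ : Fin n) ≠ ⟨1, by omega⟩ := by
        intro h
        simpa using congrArg Fin.val h
      rcases (hirr ⟨0, by omega⟩ ⟨1, by omega⟩).cases_head with h | ⟨c, harc, -⟩
      · exact h01 h
      · obtain ⟨g, -, -, l, hl0, -⟩ := harc
        exact hl0 (Fin.ext (by omega))
    -- main case : n ≥ 2 and k ≥ 2
    set ρ := specRad T with hρdef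
    have hρ0 : 0 ≤ ρ := specRad_nonneg T hT hn ⟨hxne, heig⟩
    set y : Fin n → ℝ := fun v => |x v| with hydef
    have hy0 : ∀ v, 0 ≤ y v := fun v => abs_nonneg _
    have hyne : ∃ j, 0 < y j := by
      obtain ⟨j, hj⟩ := Function.ne_iff.mp hxne
      exact ⟨j, abs_pos.mpr (by simpa using hj)⟩
    have hycert : ∀ a, ρ * y a ^ (k - 1) ≤ tapply T y a := by
      intro a
      have h1 := congrFun heig a
      calc ρ * y a ^ (k-1) = |ρ * x a ^ (k-1)| := by
            rw [abs_mul, abs_of_nonneg hρ0, abs_pow]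
        _ = |tapply T x a| := by rw [← h1]
        _ ≤ tapply T y a := abs_tapply_le T hT x a
    set R : ℝ := ∑ g : Fin k → Fin n, T g with hRdef
    have hR0 : 0 ≤ R := Finset.sum_nonneg fun g _ => hT g
    set R' : ℝ := R + (n:ℝ)^k with hR'def
    have hcardfun : (Fintype.card (Fin k → Fin n) : ℝ) = (n:ℝ)^k := by
      rw [Fintype.card_fun, Fintype.card_fin, Fintype.card_fin]
      push_cast
      ring
    have hnk0 : (0:ℝ) ≤ (n:ℝ)^k := by positivity
    have hR'0 : 0 ≤ R' := by rw [hR'def]; linarith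
    have hR'row : ∀ g, T g ≤ R' := by
      intro g
      have : T g ≤ R := Finset.single_le_sum (fun g' (_ : g' ∈ univ) => hT g') (mem_univ g)
      rw [hR'def]
      linarith
    obtain ⟨β, hβ0, hβ⟩ := uniform_lower T hT hirr hk2 hn2 hR'0 hR'row
    set F : ℕ → Set (ℝ × (Fin n → ℝ)) := fun m => {p | ρ ≤ p.1 ∧ p.1 ≤ R' ∧
      (∀ v, β ≤ p.2 v) ∧ (∀ v, 0 ≤ p.2 v) ∧ (∑ v, p.2 v) = 1 ∧
      ∀ a, |tapply T p.2 a - p.1 * p.2 a ^ (k - 1)| ≤ 1/(m+1)} with hFdef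
    have hFne : ∀ m, (F m).Nonempty := by
      intro m
      set ε : ℝ := 1/(m+1) with hεdef
      have hε0 : 0 < ε := by positivity
      have hε1 : ε ≤ 1 := by
        rw [hεdef]
        rw [div_le_one (by positivity)]
        push_cast
        linarith
      set B : (Fin k → Fin n) → ℝ := fun g => T g + ε with hBdef
      have hBc : ∀ g, ε ≤ B g := fun g => le_add_of_nonneg_left (hT g)
      have hBpos : ∀ g, 0 ≤ B g := fun g => le_trans hε0.le (hBc g)
      have hTB : ∀ g, T g ≤ B g := fun g => le_add_of_nonneg_right hε0.le
      obtain ⟨l, z, hl0, hzpos, hzsum, heigB⟩ := perron_positive B hε0 hBc hk2 hn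
      have hz0 : ∀ v, 0 ≤ z v := fun v => (hzpos v).le
      have hlRB : l ≤ ∑ g : Fin k → Fin n, B g :=
        cert_le_RB B hBpos hn hz0 hzsum (fun a => le_of_eq (heigB a).symm)
      have hsumB : (∑ g : Fin k → Fin n, B g) = R + (Fintype.card (Fin k → Fin n) : ℝ) * ε := by
        rw [hBdef, Finset.sum_add_distrib, Finset.sum_const, Finset.card_univ, nsmul_eq_mul,
          hRdef]
      have hlR' : l ≤ R' := by
        rw [hR'def]
        have : (Fintype.card (Fin k → Fin n) : ℝ) * ε ≤ (n:ℝ)^k := by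
          rw [hcardfun] at *
          nlinarith
        rw [hsumB] at hlRB
        linarith
      have hρl : ρ ≤ l := by
        apply cert_le_eigen B hBpos hn hzpos heigB hy0 hyne
        intro a
        exact le_trans (hycert a) (tapply_tensor_mono hTB hT hy0 a)
      have hβz := hβ B l z hTB hzpos hzsum hlR' heigB
      have hdiff : ∀ a, |tapply T z a - l * z a ^ (k-1)| ≤ ε := by
        intro a
        have h2 := tapply_add_const T ε z a
        rw [hzsum, one_pow, mul_one] at h2
        have h3 : tapply (fun g => T g + ε) z a = l * z a ^ (k-1) := heigB a
        have h4 : tapply T z a - l * z a ^ (k-1) = -ε := by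
          rw [← h3, h2]
          ring
        rw [h4, abs_neg, abs_of_nonneg hε0.le]
      exact ⟨(l, z), hρl, hlR', hβz, hz0, hzsum, hdiff⟩
    have hFclosed : ∀ m, IsClosed (F m) := by
      intro m
      have c1 : IsClosed {p : ℝ × (Fin n → ℝ) | ρ ≤ p.1} :=
        isClosed_le continuous_const continuous_fst
      have c2 : IsClosed {p : ℝ × (Fin n → ℝ) | p.1 ≤ R'} :=
        isClosed_le continuous_fst continuous_const
      have c3 : IsClosed {p : ℝ × (Fin n → ℝ) | ∀ v, β ≤ p.2 v} := by
        rw [Set.setOf_forall]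
        exact isClosed_iInter fun v =>
          isClosed_le continuous_const ((continuous_apply v).comp continuous_snd)
      have c4 : IsClosed {p : ℝ × (Fin n → ℝ) | ∀ v, 0 ≤ p.2 v} := by
        rw [Set.setOf_forall]
        exact isClosed_iInter fun v =>
          isClosed_le continuous_const ((continuous_apply v).comp continuous_snd)
      have c5 : IsClosed {p : ℝ × (Fin n → ℝ) | (∑ v, p.2 v) = 1} :=
        isClosed_eq (continuous_finset_sum _ fun v _ => (continuous_apply v).comp continuous_snd)
          continuous_const
      have c6 : IsClosed {p : ℝ × (Fin n → ℝ) |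
          ∀ a, |tapply T p.2 a - p.1 * p.2 a ^ (k - 1)| ≤ 1/(m+1)} := by
        rw [Set.setOf_forall]
        refine isClosed_iInter fun a => isClosed_le ?_ continuous_const
        apply Continuous.abs
        exact ((tapply_continuous T a).comp continuous_snd).sub
          (continuous_fst.mul (((continuous_apply a).comp continuous_snd).pow _))
      exact c1.inter (c2.inter (c3.inter (c4.inter (c5.inter c6))))
    have hF0compact : IsCompact (F 0) := by
      apply IsCompact.of_isClosed_subset ((isCompact_Icc).prod (isCompact_Icc
        (a := (0 : Fin n → ℝ)) (b := 1))) (hFclosed 0)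
      rintro ⟨l, z⟩ ⟨h1, h2, h3, h4, h5, h6⟩
      refine ⟨⟨h1, h2⟩, fun v => h4 v, fun v => ?_⟩
      calc z v ≤ ∑ u, z u := Finset.single_le_sum (fun u _ => h4 u) (mem_univ v)
        _ = 1 := h5
    have hFdec : ∀ m, F (m+1) ⊆ F m := by
      rintro m ⟨l, z⟩ ⟨h1, h2, h3, h4, h5, h6⟩
      refine ⟨h1, h2, h3, h4, h5, fun a => le_trans (h6 a) ?_⟩
      apply div_le_div_of_nonneg_left one_pos.le (by positivity)
      push_cast
      linarith
    obtain ⟨⟨l', w⟩, hmem⟩ := IsCompact.nonempty_iInter_of_sequence_nonempty_isCompact_isClosed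
      F hFdec hFne hF0compact hFclosed
    have hm := fun m => Set.mem_iInter.mp hmem m
    have hρl' : ρ ≤ l' := (hm 0).1
    have hwβ : ∀ v, β ≤ w v := (hm 0).2.2.1
    have hwpos : ∀ v, 0 < w v := fun v => lt_of_lt_of_le hβ0 (hwβ v)
    have hwsum : ∑ v, w v = 1 := (hm 0).2.2.2.2.1
    have heigw : ∀ a, tapply T w a = l' * w a ^ (k-1) := by
      intro a
      by_contra hne'
      have hd0 : 0 < |tapply T w a - l' * w a ^ (k-1)| := abs_pos.mpr (sub_ne_zero.mpr hne')
      obtain ⟨m, hmlt⟩ := exists_nat_one_div_lt hd0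
      exact absurd ((hm m).2.2.2.2.2 a) (not_le.mpr (by push_cast at hmlt ⊢; linarith))
    have hweigen : IsEigenpair T l' w := by
      refine ⟨?_, funext heigw⟩
      intro h0
      have := congrFun h0 i
      exact absurd this (ne_of_gt (hwpos i))
    have hl'ρ : l' ≤ ρ := by
      have h1 := real_eigen_le_specRad T hT hn hweigen
      rwa [abs_of_nonneg (le_trans hρ0 hρl')] at h1
    have hl'eq : l' = ρ := le_antisymm hl'ρ hρl'
    have heigw' : ∀ a, tapply T w a = ρ * w a ^ (k-1) := by
      intro a
      rw [← hl'eq]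
      exact heigw a
    have hypos := pos_of_cert_eq_eigen T hT hirr hn hwpos heigw' hy0 hyne hycert
    have := hypos i
    rw [hydef] at this
    simp only [hxi, abs_zero] at this
    exact lt_irrefl 0 this
end

section
/- For the complete 4-uniform hypergraph on 4 vertices (a single edge {1,2,3,4}), the four vectors (1,1,1,1), (1,1,-1,-1), (1,-1,1,-1), (1,-1,-1,1) are linearly independent eigenvectors of the Laplacian tensor corresponding to eigenvalue 0; hence the geometry connectivity β(G) = 1 is strictly less than the maximum number of linearly independent (not necessarily nonnegative) eigenvectors of L_G for eigenvalue 0. -/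
open Finset

/-- The 4-uniform hypergraph on 4 vertices with the single edge {1,2,3,4}. -/
noncomputable def singleEdgeHG : UniformHypergraph 4 4 :=
  ⟨{Finset.univ}, by
    intro e he
    rw [Finset.mem_singleton] at he
    subst he
    simp⟩

/-- The four vectors (1,1,1,1), (1,1,-1,-1), (1,-1,1,-1), (1,-1,-1,1). -/
noncomputable def fourVecs : Fin 4 → Fin 4 → ℝ :=
  ![![1, 1, 1, 1], ![1, 1, -1, -1], ![1, -1, 1, -1], ![1, -1, -1, 1]]


section Aux

lemma mem_edges_iff (g : Fin 4 → Fin 4) :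
    Finset.image g Finset.univ ∈ singleEdgeHG.edges ↔ Function.Bijective g := by
  simp only [singleEdgeHG, Finset.mem_singleton]
  rw [← Finset.coe_inj, Finset.coe_image, Finset.coe_univ, Set.image_univ, Set.range_eq_univ]
  exact ⟨fun h => Finite.surjective_iff_bijective.mp h, fun h => h.2⟩

lemma perm_card (i : Fin 4) :
    (Finset.univ.filter (fun σ : Equiv.Perm (Fin 4) => σ 0 = i)).card = 6 := by
  revert i; decide

lemma tapply_lap (x : Fin 4 → ℝ) (i : Fin 4) :
    tapply singleEdgeHG.lapTensor x i = x i ^ 3 - ∏ j ∈ Finset.univ.erase i, x j := by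
  have hsplit : tapply singleEdgeHG.lapTensor x i =
      (∑ g : Fin 4 → Fin 4, if g 0 = i then
          singleEdgeHG.degTensor g * ∏ j ∈ Finset.univ.erase (0 : Fin 4), x (g j) else 0)
      - (∑ g : Fin 4 → Fin 4, if g 0 = i then
          singleEdgeHG.adjTensor g * ∏ j ∈ Finset.univ.erase (0 : Fin 4), x (g j) else 0) := by
    rw [tapply, ← Finset.sum_sub_distrib]
    refine Finset.sum_congr rfl fun g _ => ?_
    unfold UniformHypergraph.lapTensor
    split <;> ring
  rw [hsplit]
  have hD : (∑ g : Fin 4 → Fin 4, if g 0 = i then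
      singleEdgeHG.degTensor g * ∏ j ∈ Finset.univ.erase (0 : Fin 4), x (g j) else 0)
      = x i ^ 3 := by
    rw [Finset.sum_eq_single (fun _ => i)]
    · have hdeg : singleEdgeHG.degree i = 1 := by
        simp [UniformHypergraph.degree, singleEdgeHG, Finset.filter_singleton]
      simp only [UniformHypergraph.degTensor]
      simp [hdeg, Finset.prod_const, Finset.card_erase_of_mem]
    · intro g _ hg
      by_cases h0 : g 0 = i
      · rw [if_pos h0]
        simp only [UniformHypergraph.degTensor]
        rw [if_neg, zero_mul]
        intro hc
        exact hg (funext fun j => (hc j).trans h0)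
      · simp [h0]
    · intro h; exact absurd (Finset.mem_univ _) h
  have hA : (∑ g : Fin 4 → Fin 4, if g 0 = i then
      singleEdgeHG.adjTensor g * ∏ j ∈ Finset.univ.erase (0 : Fin 4), x (g j) else 0)
      = ∏ j ∈ Finset.univ.erase i, x j := by
    have key : ∀ g : Fin 4 → Fin 4,
        (if g 0 = i then singleEdgeHG.adjTensor g * ∏ j ∈ Finset.univ.erase (0 : Fin 4), x (g j) else 0)
        = if g 0 = i ∧ Function.Bijective g then (1/6) * ∏ j ∈ Finset.univ.erase (0 : Fin 4), x (g j) else 0 := by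
      intro g
      simp only [UniformHypergraph.adjTensor, mem_edges_iff]
      by_cases h1 : g 0 = i <;> by_cases h2 : Function.Bijective g <;>
        simp [h1, h2, Nat.factorial]
    rw [Finset.sum_congr rfl (fun g _ => key g)]
    have himg : ∀ g : Fin 4 → Fin 4, Function.Bijective g →
        g ∈ Finset.univ.image (fun σ : Equiv.Perm (Fin 4) => (σ : Fin 4 → Fin 4)) := by
      intro g hg
      exact Finset.mem_image.mpr ⟨Equiv.ofBijective g hg, Finset.mem_univ _, rfl⟩
    rw [← Finset.sum_subset (Finset.subset_univ
        (Finset.univ.image (fun σ : Equiv.Perm (Fin 4) => (σ : Fin 4 → Fin 4))))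
        (fun g _ hg => by
          rw [if_neg]; intro ⟨_, hb⟩; exact hg (himg g hb))]
    rw [Finset.sum_image (fun a _ b _ h => Equiv.coe_fn_injective h)]
    have hval : ∀ σ : Equiv.Perm (Fin 4), σ 0 = i →
        (∏ j ∈ Finset.univ.erase (0 : Fin 4), x (σ j)) = ∏ j ∈ Finset.univ.erase i, x j := by
      intro σ hσ
      rw [← Finset.prod_image (fun a _ b _ h => σ.injective h)]
      congr 1
      rw [Finset.image_erase σ.injective, hσ]
      congr 1
      exact Finset.image_univ_equiv σ
    have hite : ∀ σ : Equiv.Perm (Fin 4),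
        (if (σ : Fin 4 → Fin 4) 0 = i ∧ Function.Bijective (σ : Fin 4 → Fin 4) then
          (1/6) * ∏ j ∈ Finset.univ.erase (0 : Fin 4), x (σ j) else 0)
        = if σ 0 = i then (1/6) * ∏ j ∈ Finset.univ.erase i, x j else 0 := by
      intro σ
      by_cases h1 : σ 0 = i
      · rw [if_pos ⟨h1, σ.bijective⟩, if_pos h1, hval σ h1]
      · rw [if_neg (fun h => h1 h.1), if_neg h1]
    rw [Finset.sum_congr rfl (fun σ _ => hite σ), ← Finset.sum_filter, Finset.sum_const,
      perm_card]
    ring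
  rw [hD, hA]

lemma tapply_lap_zero_iff (x : Fin 4 → ℝ) :
    tapply singleEdgeHG.lapTensor x = 0 ↔
      ∀ i, x i ^ 3 = ∏ j ∈ Finset.univ.erase i, x j := by
  constructor
  · intro h i
    have := congrFun h i
    rw [tapply_lap] at this
    simpa [sub_eq_zero] using this
  · intro h
    funext i
    rw [tapply_lap, h i]
    simp

lemma nonneg_null_const (x : Fin 4 → ℝ) (hx : x ≠ 0) (hnn : ∀ i, 0 ≤ x i)
    (h : ∀ i, x i ^ 3 = ∏ j ∈ Finset.univ.erase i, x j) :
    ∀ i, x i = x 0 := by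
  -- first, all entries are positive
  have hpos : ∀ i, 0 < x i := by
    by_contra hc
    push_neg at hc
    obtain ⟨a, ha⟩ := hc
    have ha0 : x a = 0 := le_antisymm ha (hnn a)
    have hall : ∀ i, x i = 0 := by
      intro i
      by_cases hia : i = a
      · rw [hia]; exact ha0
      · have : x i ^ 3 = 0 := by
          rw [h i]
          exact Finset.prod_eq_zero (Finset.mem_erase.mpr ⟨fun hh => hia hh.symm, Finset.mem_univ a⟩) ha0
        exact pow_eq_zero_iff (by norm_num) |>.mp this
    exact hx (funext hall)
  have hP : ∀ i, x i ^ 4 = ∏ j, x j := by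
    intro i
    have := h i
    calc x i ^ 4 = x i ^ 3 * x i := by ring
    _ = (∏ j ∈ Finset.univ.erase i, x j) * x i := by rw [h i]
    _ = ∏ j, x j := Finset.prod_erase_mul _ _ (Finset.mem_univ i)
  intro i
  have h4 : x i ^ 4 = x 0 ^ 4 := by rw [hP i, hP 0]
  exact (pow_left_inj₀ (hnn i) (hnn 0) (by norm_num)).mp h4

end Aux
lemma prod_univ_erase (x : Fin 4 → ℝ) (j : Fin 4) (hxj : x j ≠ 0) :
    ∏ k ∈ Finset.univ.erase j, x k = (∏ k, x k) / x j := by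
  rw [eq_div_iff hxj, Finset.prod_erase_mul _ _ (Finset.mem_univ j)]

lemma fourVecs_zero (i : Fin 4) : fourVecs i 0 = 1 := by
  fin_cases i <;> norm_num [fourVecs]

lemma fourVecs_pm (i j : Fin 4) : fourVecs i j = 1 ∨ fourVecs i j = -1 := by
  fin_cases i <;> fin_cases j <;> norm_num [fourVecs]

lemma fourVecs_prod (i : Fin 4) : ∏ j, fourVecs i j = 1 := by
  fin_cases i <;> norm_num [fourVecs, Fin.prod_univ_four, Matrix.cons_val_two, Matrix.cons_val_three]

/-- the four vectors are linearly independent eigenvectors of the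
Laplacian tensor of the single-edge 4-uniform hypergraph for eigenvalue 0, while
the geometry connectivity is 1; hence `β(G)` is strictly smaller than the maximum
number of linearly independent (not necessarily nonnegative) null eigenvectors. -/
theorem singleEdge_geometry_lt_full :
    (∀ i : Fin 4, IsEigenpair singleEdgeHG.lapTensor 0 (fourVecs i)) ∧
    LinearIndependent ℝ fourVecs ∧
    maxLinIndep {x : Fin 4 → ℝ | x ≠ 0 ∧ (∀ i, 0 ≤ x i) ∧
      tapply singleEdgeHG.lapTensor x = 0} 1 ∧
    (∀ m : ℕ, maxLinIndep {x : Fin 4 → ℝ | IsEigenpair singleEdgeHG.lapTensor 0 x} m →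
      1 < m) := by
  have heig : ∀ i : Fin 4, IsEigenpair singleEdgeHG.lapTensor 0 (fourVecs i) := by
    intro i
    refine ⟨?_, ?_⟩
    · intro hzero
      have h0 := congrFun hzero 0
      rw [fourVecs_zero] at h0
      simp at h0
    · funext j
      rw [tapply_lap]
      have hne : fourVecs i j ≠ 0 := by
        rcases fourVecs_pm i j with h | h <;> rw [h] <;> norm_num
      rw [prod_univ_erase _ j hne, fourVecs_prod]
      rcases fourVecs_pm i j with h | h <;> rw [h] <;> norm_num
  have hli : LinearIndependent ℝ fourVecs := by
    have : IsUnit (Matrix.of fourVecs) := by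
      rw [Matrix.isUnit_iff_isUnit_det, isUnit_iff_ne_zero]
      simp [Matrix.det_succ_row_zero, Fin.sum_univ_succ, fourVecs, Fin.succAbove]
      norm_num
    exact Matrix.linearIndependent_rows_iff_isUnit.mpr this
  refine ⟨heig, hli, ?_, ?_⟩
  · set u : Fin 4 → ℝ := fun _ => 1 with hu
    have hu_mem : u ∈ {x : Fin 4 → ℝ | x ≠ 0 ∧ (∀ i, 0 ≤ x i) ∧
        tapply singleEdgeHG.lapTensor x = 0} := by
      refine ⟨fun h => ?_, fun i => by norm_num [hu], ?_⟩
      · have := congrFun h 0; simp [hu] at this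
      · rw [tapply_lap_zero_iff]
        intro i
        simp [hu]
    constructor
    · refine ⟨fun _ => u, fun _ => hu_mem, ?_⟩
      apply linearIndependent_unique_iff.mpr
      intro h
      have := congrFun h 0
      simp [hu] at this
    · intro m w hw hind
      have hspan : ∀ i, w i ∈ Submodule.span ℝ {u} := by
        intro i
        obtain ⟨hne, hnn, hz⟩ := hw i
        have hconst : ∀ j, w i j = w i 0 :=
          nonneg_null_const (w i) hne hnn ((tapply_lap_zero_iff (w i)).mp hz)
        have hwi : w i = (w i 0) • u := by
          funext j
          simp [hu, hconst j]
        rw [hwi]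
        exact Submodule.smul_mem _ _ (Submodule.mem_span_singleton_self u)
      have hu0 : u ≠ 0 := by
        intro h; have := congrFun h 0; simp [hu] at this
      let w' : Fin m → Submodule.span ℝ {u} := fun i => ⟨w i, hspan i⟩
      have hind' : LinearIndependent ℝ w' := by
        apply LinearIndependent.of_comp (Submodule.span ℝ {u}).subtype
        exact hind
      have hcard := hind'.fintype_card_le_finrank
      rwa [Fintype.card_fin, finrank_span_singleton hu0] at hcard
  · intro m hm
    have h4 : 4 ≤ m := hm.2 4 fourVecs (fun i => heig i) hli
    omega
end
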